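/- For symmetric traceless rank-l1 and rank-l2 Cartesian tensors x and y (l1, l2 ≥ 1), the double contraction with the Levi-Civita symbol defined by (ε : x ·(s)· y)_{i1, rest} = Σ_{i2,i3} ε_{i1 i2 i3} (x ·(s)· y)_{i2 i3, rest} is equivariant under the action of SO(3): applying R ∈ SO(3) to x and y and then forming the expression equals applying R to the result. -/

import Mathlib

open Matrix

/-- Rank-`n` Cartesian tensor over `ℝ^3`. -/
def CT (n : ℕ) : Type := (Fin n → Fin 3) → ℝ

/-- Induced action of a 3×3 matrix on a rank-`n` Cartesian tensor. -/
def act {n : ℕ} (R : Matrix (Fin 3) (Fin 3) ℝ) (T : CT n) : CT n :=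
  fun i => ∑ j : Fin n → Fin 3, (∏ k : Fin n, R (i k) (j k)) * T j

/-- Total symmetry of a Cartesian tensor. -/
def IsSym {n : ℕ} (T : CT n) : Prop :=
  ∀ σ : Equiv.Perm (Fin n), ∀ i, T (i ∘ σ) = T i

/-- Tracelessness: contraction over any pair of distinct indices vanishes. -/
def IsTraceless {n : ℕ} (T : CT n) : Prop :=
  ∀ p q : Fin n, p ≠ q → ∀ i : Fin n → Fin 3,
    ∑ c : Fin 3, T (fun k => if k = p then c else if k = q then c else i k) = 0

/-- The Levi-Civita symbol on three indices. -/
noncomputable def eps (i j k : Fin 3) : ℝ :=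
  (((i : ℕ) : ℝ) - ((j : ℕ) : ℝ)) * (((j : ℕ) : ℝ) - ((k : ℕ) : ℝ))
    * (((k : ℕ) : ℝ) - ((i : ℕ) : ℝ)) / 2

/-- Double contraction with the Levi-Civita symbol of the `s`-fold contraction of
`x` and `y`: `(ε : x ·(s)· y)_{i1, rest} = Σ_{i2 i3} ε_{i1 i2 i3} (x ·(s)· y)_{i2 i3, rest}`. -/
noncomputable def epsContr {s a b : ℕ} (x : CT (s + (a + 1))) (y : CT (s + (b + 1))) :
    CT (a + b + 1) :=
  fun i => ∑ j2 : Fin 3, ∑ j3 : Fin 3, eps (i 0) j2 j3 *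
    ∑ α : Fin s → Fin 3,
      x (Fin.append α (Fin.cons j2 fun k => Fin.tail i (Fin.castAdd b k))) *
        y (Fin.append α (Fin.cons j3 fun k => Fin.tail i (Fin.natAdd a k)))

/-!
Fix an output index `(m, w₁, w₂)`. Let `X` be `x` with its last `a` indices rotated by `R` and
evaluated at `w₁`, read as a matrix in the `s` contracted indices and the free middle index
(`tailAct`), and `Y` likewise for `y` at `w₂`. Since `R^{⊗s}` is orthogonal, the rotation of the
contracted indices drops out, so the left side is the axial vector of `R (Xᵀ Y) Rᵀ` at `m`, while
the right side is `R` applied to the axial vector of `Xᵀ Y`. These agree by the cofactor identity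
`Rᵀ · axial(R Q Rᵀ) = det R · axial(Q)`, valid for every `3 × 3` matrix `R`.
-/

open Finset

section TensorPow

variable {ι K : Type*} [CommSemiring K] (σ : Type*) [Fintype σ]

def tensorPow (A : Matrix ι ι K) : Matrix (σ → ι) (σ → ι) K :=
  of fun i j => ∏ k, A (i k) (j k)

theorem tensorPow_mul [Fintype ι] [DecidableEq σ] (A B : Matrix ι ι K) :
    tensorPow σ (A * B) = tensorPow σ A * tensorPow σ B := by
  ext i j
  simp only [tensorPow, of_apply, mul_apply, prod_univ_sum, Fintype.piFinset_univ,
    prod_mul_distrib]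

theorem tensorPow_one [DecidableEq ι] : tensorPow σ (1 : Matrix ι ι K) = 1 := by
  ext i j
  simp only [tensorPow, of_apply, one_apply, prod_boole, mem_univ, true_implies, funext_iff]

theorem tensorPow_transpose (A : Matrix ι ι K) : tensorPow σ Aᵀ = (tensorPow σ A)ᵀ := rfl

theorem tensorPow_transpose_mul_self [Fintype ι] [DecidableEq ι] [DecidableEq σ]
    {A : Matrix ι ι K} (hA : Aᵀ * A = 1) : (tensorPow σ A)ᵀ * tensorPow σ A = 1 := by
  rw [← tensorPow_transpose, ← tensorPow_mul, hA, tensorPow_one]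

end TensorPow

theorem sum_fun_cons {M α : Type*} [AddCommMonoid M] [Fintype α] {n : ℕ}
    (f : (Fin (n + 1) → α) → M) :
    ∑ p, f p = ∑ c, ∑ w, f (Fin.cons c w) := by
  rw [← Fintype.sum_prod_type']
  exact (Fintype.sum_equiv (Fin.consEquiv fun _ => α) _ _ fun _ => rfl).symm

theorem sum_fun_append {M α : Type*} [AddCommMonoid M] [Fintype α] {m n : ℕ}
    (f : (Fin (m + n) → α) → M) :
    ∑ p, f p = ∑ u, ∑ v, f (Fin.append u v) := by
  rw [← Fintype.sum_prod_type']
  exact (Fintype.sum_equiv (Fin.appendEquiv m n) _ _ fun _ => rfl).symm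

section Act

variable (R : Matrix (Fin 3) (Fin 3) ℝ) {n : ℕ}

theorem act_eq_mulVec (T : (Fin n → Fin 3) → ℝ) : act R T = tensorPow (Fin n) R *ᵥ T := rfl

theorem sum_act_mul_act {R} (hR : Rᵀ * R = 1) (f g : (Fin n → Fin 3) → ℝ) :
    ∑ α, act R f α * act R g α = ∑ α, f α * g α := by
  change act R f ⬝ᵥ act R g = f ⬝ᵥ g
  rw [act_eq_mulVec, act_eq_mulVec, dotProduct_mulVec, ← vecMul_transpose, vecMul_vecMul,
    tensorPow_transpose_mul_self _ hR, vecMul_one]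

theorem act_sum {ι : Type*} (s : Finset ι) (T : ι → (Fin n → Fin 3) → ℝ) (i : Fin n → Fin 3) :
    act R (fun j => ∑ t ∈ s, T t j) i = ∑ t ∈ s, act R (T t) i := by
  simp only [act, mul_sum]
  exact sum_comm

theorem act_const_mul (c : ℝ) (T : (Fin n → Fin 3) → ℝ) (i : Fin n → Fin 3) :
    act R (fun j => c * T j) i = c * act R T i := by
  simp only [act, mul_sum]
  exact sum_congr rfl fun _ _ => mul_left_comm _ _ _

theorem act_mul_const (c : ℝ) (T : (Fin n → Fin 3) → ℝ) (i : Fin n → Fin 3) :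
    act R (fun j => T j * c) i = act R T i * c := by
  simp only [act, sum_mul, mul_assoc]

theorem act_cons (T : (Fin (n + 1) → Fin 3) → ℝ) (c : Fin 3) (w : Fin n → Fin 3) :
    act R T (Fin.cons c w) = ∑ c', R c c' * act R (fun u => T (Fin.cons c' u)) w := by
  simp only [act, sum_fun_cons (n := n), Fin.prod_univ_succ, Fin.cons_zero, Fin.cons_succ,
    mul_sum, mul_assoc]

theorem act_append {m : ℕ} (T : (Fin (m + n) → Fin 3) → ℝ) (α : Fin m → Fin 3)
    (w : Fin n → Fin 3) :
    act R T (Fin.append α w) = act R (fun β => act R (fun u => T (Fin.append β u)) w) α := by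
  simp only [act, sum_fun_append (m := m), Fin.prod_univ_add, Fin.append_left, Fin.append_right,
    mul_sum, mul_assoc]

end Act

noncomputable def axialVec (Q : Matrix (Fin 3) (Fin 3) ℝ) : Fin 3 → ℝ :=
  fun i => ∑ j, ∑ k, eps i j k * Q j k

theorem transpose_mulVec_axialVec_conj (R Q : Matrix (Fin 3) (Fin 3) ℝ) :
    Rᵀ *ᵥ axialVec (R * Q * Rᵀ) = R.det • axialVec Q := by
  ext m
  fin_cases m <;>
    simp [mulVec, dotProduct, axialVec, eps, det_fin_three, mul_apply, Fin.sum_univ_three] <;>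
    ring

theorem axialVec_conj {R : Matrix (Fin 3) (Fin 3) ℝ} (hR : Rᵀ * R = 1) (hdet : R.det = 1)
    (Q : Matrix (Fin 3) (Fin 3) ℝ) : axialVec (R * Q * Rᵀ) = R *ᵥ axialVec Q := by
  rw [← one_smul ℝ (axialVec Q), ← hdet, ← transpose_mulVec_axialVec_conj, mulVec_mulVec,
    mul_eq_one_comm.mp hR, one_mulVec]

section TailAct

variable {s a b : ℕ}

def tailAct (R : Matrix (Fin 3) (Fin 3) ℝ) (x : CT (s + (a + 1))) (w : Fin a → Fin 3) :
    Matrix (Fin s → Fin 3) (Fin 3) ℝ :=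
  of fun β c => act R (fun u => x (Fin.append β (Fin.cons c u))) w

theorem act_append_cons (R : Matrix (Fin 3) (Fin 3) ℝ) (x : CT (s + (a + 1)))
    (α : Fin s → Fin 3) (c : Fin 3) (w : Fin a → Fin 3) :
    act R x (Fin.append α (Fin.cons c w)) = act R (fun β => (tailAct R x w * Rᵀ) β c) α := by
  rw [act_append R x]
  congr 1
  funext β
  simp only [act_cons, mul_apply, tailAct, of_apply, transpose_apply, mul_comm]

theorem sum_act_append_cons_mul {R : Matrix (Fin 3) (Fin 3) ℝ} (hR : Rᵀ * R = 1)
    (x : CT (s + (a + 1))) (y : CT (s + (b + 1))) (j₂ j₃ : Fin 3)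
    (w₁ : Fin a → Fin 3) (w₂ : Fin b → Fin 3) :
    ∑ α, act R x (Fin.append α (Fin.cons j₂ w₁)) * act R y (Fin.append α (Fin.cons j₃ w₂))
      = (R * ((tailAct R x w₁)ᵀ * tailAct R y w₂) * Rᵀ) j₂ j₃ := by
  simp_rw [act_append_cons R x, act_append_cons R y, sum_act_mul_act hR]
  rw [show R * ((tailAct R x w₁)ᵀ * tailAct R y w₂) * Rᵀ
      = (tailAct R x w₁ * Rᵀ)ᵀ * (tailAct R y w₂ * Rᵀ) by
    simp only [transpose_mul, transpose_transpose, Matrix.mul_assoc], mul_apply]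
  rfl

theorem epsContr_act_act {R : Matrix (Fin 3) (Fin 3) ℝ} (hR : Rᵀ * R = 1)
    (x : CT (s + (a + 1))) (y : CT (s + (b + 1)))
    (m : Fin 3) (w₁ : Fin a → Fin 3) (w₂ : Fin b → Fin 3) :
    epsContr (act R x) (act R y) (Fin.cons m (Fin.append w₁ w₂))
      = axialVec (R * ((tailAct R x w₁)ᵀ * tailAct R y w₂) * Rᵀ) m := by
  simp only [epsContr, Fin.cons_zero, Fin.tail_cons, Fin.append_left, Fin.append_right,
    sum_act_append_cons_mul hR]
  rfl

theorem act_epsContr (R : Matrix (Fin 3) (Fin 3) ℝ)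
    (x : CT (s + (a + 1))) (y : CT (s + (b + 1)))
    (m : Fin 3) (w₁ : Fin a → Fin 3) (w₂ : Fin b → Fin 3) :
    act R (epsContr x y) (Fin.cons m (Fin.append w₁ w₂))
      = (R *ᵥ axialVec ((tailAct R x w₁)ᵀ * tailAct R y w₂)) m := by
  simp only [act_cons R (epsContr x y), act_append, epsContr, Fin.cons_zero, Fin.tail_cons,
    Fin.append_left, Fin.append_right, act_sum, act_const_mul, act_mul_const]
  simp only [mulVec, dotProduct, axialVec, mul_apply, transpose_apply, tailAct, of_apply]

end TailAct

theorem epsContr_equivariant_general (s a b : ℕ)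
    (x : CT (s + (a + 1))) (y : CT (s + (b + 1)))
    (R : Matrix (Fin 3) (Fin 3) ℝ) (hR : Rᵀ * R = 1) (hdet : R.det = 1) :
    epsContr (act R x) (act R y) = act R (epsContr x y) := by
  funext i
  obtain ⟨m, w₁, w₂, rfl⟩ : ∃ m w₁ w₂, i = Fin.cons m (Fin.append w₁ w₂) :=
    ⟨i 0, _, _, by rw [Fin.append_castAdd_natAdd, Fin.cons_self_tail]⟩
  rw [epsContr_act_act hR, act_epsContr, axialVec_conj hR hdet]

theorem epsContr_equivariant (s a b : ℕ)
    (x : CT (s + (a + 1))) (y : CT (s + (b + 1)))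
    (hxs : IsSym x) (hxt : IsTraceless x) (hys : IsSym y) (hyt : IsTraceless y)
    (R : Matrix (Fin 3) (Fin 3) ℝ) (hR : Rᵀ * R = 1) (hdet : R.det = 1) :
    epsContr (act R x) (act R y) = act R (epsContr x y) :=
  epsContr_equivariant_general s a b x y R hR hdet
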